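/- Let F be a finite field, A a commutative group (written additively), and s an A-valued symbol on F. Then s is trivial, i.e. s(x, y) = 0 for all x, y ∈ Fˣ. (Equivalently, K₂ of a finite field vanishes.) -/

import Mathlib

/-! The unit group `Fˣ` is cyclic, say generated by `g`, and bilinearity gives
`s (g ^ m) (g ^ k) = (m * k) • s g g`, so everything hinges on `c = s g g`. The Steinberg
relation yields `s x (-x) = 0` and hence antisymmetry, so `2 • c = 0` and
`c = s (g ^ m) (g ^ k)` for all odd `m`, `k`. If `g` has odd order `n`, then
`c = s (g ^ n) g = s 1 g = 0`. Otherwise `g` is not a square; writing `g = a ^ 2 + b ^ 2` gives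
`a ^ 2 / g + b ^ 2 / g = 1`, a sum of two odd powers of `g`, so `c = 0`. -/

/-- An `A`-valued symbol on the field `F`: a `ℤ`-bilinear map on `Fˣ × Fˣ`
vanishing on pairs `(x, y)` with `x + y = 1`. -/
def IsAddSymbol {F A : Type*} [Field F] [AddCommGroup A] (s : Fˣ → Fˣ → A) : Prop :=
  (∀ x x' y : Fˣ, s (x * x') y = s x y + s x' y) ∧
  (∀ x y y' : Fˣ, s x (y * y') = s x y + s x y') ∧
  (∀ x y : Fˣ, (x : F) + (y : F) = 1 → s x y = 0)

theorem not_isSquare_of_even_orderOf {G : Type*} [Group G] {g : G}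
    (hg : ∀ x, x ∈ Subgroup.zpowers g) (heven : Even (orderOf g)) : ¬IsSquare g := by
  rintro ⟨r, hr⟩
  obtain ⟨j, rfl⟩ := Subgroup.mem_zpowers_iff.mp (hg r)
  have hpow : g ^ (2 * j - 1) = 1 := by
    rw [zpow_sub_one, mul_inv_eq_one, two_mul, zpow_add]
    exact hr.symm
  have : Even (2 * j - 1) :=
    (heven.natCast (α := ℤ)).trans_dvd (orderOf_dvd_iff_zpow_eq_one.mpr hpow)
  grind

namespace FiniteField

variable {F : Type*} [Field F] [Finite F]

theorem exists_sq_add_sq (x : F) : ∃ a b : F, a ^ 2 + b ^ 2 = x := by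
  have := Fintype.ofFinite F
  by_cases hF : ringChar F = 2
  · obtain ⟨a, rfl⟩ := isSquare_of_char_two hF x
    exact ⟨a, 0, by ring⟩
  · obtain ⟨a, b, hab⟩ := exists_root_sum_quadratic (Polynomial.degree_X_pow 2)
      (Polynomial.degree_X_pow_sub_C two_pos x) (odd_card_of_char_ne_two hF)
    refine ⟨a, b, ?_⟩
    simp only [Polynomial.eval_sub, Polynomial.eval_pow, Polynomial.eval_X,
      Polynomial.eval_C] at hab
    linear_combination hab

theorem exists_odd_zpow_add_odd_zpow_eq_one {g : Fˣ} (hg : ∀ x, x ∈ Subgroup.zpowers g)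
    (heven : Even (orderOf g)) :
    ∃ m k : ℤ, Odd m ∧ Odd k ∧ ((g ^ m : Fˣ) : F) + ((g ^ k : Fˣ) : F) = 1 := by
  obtain ⟨a, b, hab⟩ := exists_sq_add_sq (g : F)
  have hsq : ∀ c : F, c ^ 2 = g → False := fun c hc =>
    not_isSquare_of_even_orderOf hg heven
      ⟨Units.mk0 c (by rintro rfl; exact g.ne_zero (by simpa using hc.symm)),
        Units.ext (by simp [← hc, sq])⟩
  have ha : a ≠ 0 := by rintro rfl; exact hsq b (by simpa using hab)
  have hb : b ≠ 0 := by rintro rfl; exact hsq a (by simpa using hab)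
  obtain ⟨p, hp⟩ := Subgroup.mem_zpowers_iff.mp (hg (Units.mk0 a ha))
  obtain ⟨r, hr⟩ := Subgroup.mem_zpowers_iff.mp (hg (Units.mk0 b hb))
  refine ⟨2 * p - 1, 2 * r - 1, ⟨p - 1, by ring⟩, ⟨r - 1, by ring⟩, ?_⟩
  have hodd_pow : ∀ (j : ℤ) (c : Fˣ), g ^ j = c → g ^ (2 * j - 1) = c ^ 2 * g⁻¹ := by
    rintro j c rfl
    group
  rw [hodd_pow p _ hp, hodd_pow r _ hr]
  push_cast [Units.val_mk0]
  field_simp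
  linear_combination hab

end FiniteField

namespace IsAddSymbol

variable {F A : Type*} [Field F] [AddCommGroup A] {s : Fˣ → Fˣ → A}

theorem apply_mul_left (hs : IsAddSymbol s) (x x' y : Fˣ) : s (x * x') y = s x y + s x' y :=
  hs.1 x x' y

theorem apply_mul_right (hs : IsAddSymbol s) (x y y' : Fˣ) : s x (y * y') = s x y + s x y' :=
  hs.2.1 x y y'

theorem apply_eq_zero_of_add_eq_one (hs : IsAddSymbol s) {x y : Fˣ} (h : (x : F) + y = 1) :
    s x y = 0 :=
  hs.2.2 x y h

theorem flip (hs : IsAddSymbol s) : IsAddSymbol (flip s) :=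
  ⟨fun x x' y => hs.apply_mul_right y x x', fun x y y' => hs.apply_mul_left y y' x,
    fun _ _ h => hs.apply_eq_zero_of_add_eq_one (by rwa [add_comm])⟩

theorem apply_zpow_left (hs : IsAddSymbol s) (x y : Fˣ) (m : ℤ) : s (x ^ m) y = m • s x y :=
  map_zsmul (AddMonoidHom.mk' (fun u : Additive Fˣ => s u.toMul y)
    fun _ _ => hs.apply_mul_left _ _ _) m (Additive.ofMul x)

theorem apply_zpow_right (hs : IsAddSymbol s) (x y : Fˣ) (m : ℤ) : s x (y ^ m) = m • s x y :=
  hs.flip.apply_zpow_left y x m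

theorem apply_one_left (hs : IsAddSymbol s) (y : Fˣ) : s 1 y = 0 := by
  simpa using hs.apply_zpow_left 1 y 0

theorem apply_inv_left (hs : IsAddSymbol s) (x y : Fˣ) : s x⁻¹ y = -s x y := by
  simpa using hs.apply_zpow_left x y (-1)

theorem apply_inv_right (hs : IsAddSymbol s) (x y : Fˣ) : s x y⁻¹ = -s x y :=
  hs.flip.apply_inv_left y x

theorem apply_zpow_zpow (hs : IsAddSymbol s) (x : Fˣ) (m k : ℤ) :
    s (x ^ m) (x ^ k) = (m * k) • s x x := by
  rw [hs.apply_zpow_left, hs.apply_zpow_right, mul_smul]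

/-- `-x = (1 - x) / (1 - x⁻¹)`, and both `s x (1 - x)` and `s x⁻¹ (1 - x⁻¹)` vanish. -/
theorem apply_neg_self (hs : IsAddSymbol s) (x : Fˣ) : s x (-x) = 0 := by
  rcases eq_or_ne x 1 with rfl | hx
  · exact hs.apply_one_left _
  have hx' : (x : F) ≠ 1 := fun h => hx (Units.ext h)
  let a : Fˣ := Units.mk0 (1 - x) (sub_ne_zero.mpr hx'.symm)
  let b : Fˣ := Units.mk0 (1 - x⁻¹) (sub_ne_zero.mpr <| by
    rw [Ne, eq_comm, ← Units.val_one, Units.val_inj, inv_eq_one]; exact hx)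
  have hab : -x = a * b⁻¹ := by
    refine Units.ext ?_
    simp only [a, b, Units.val_neg, Units.val_mul, Units.val_mk0, Units.val_inv_eq_inv_val]
    field_simp
    ring
  have ha : s x a = 0 := hs.apply_eq_zero_of_add_eq_one (by simp [a])
  have hb : s x b = 0 := by
    rw [← neg_eq_zero, ← hs.apply_inv_left]
    exact hs.apply_eq_zero_of_add_eq_one (by simp [b])
  rw [hab, hs.apply_mul_right, hs.apply_inv_right, ha, hb, neg_zero, add_zero]

theorem apply_add_apply_swap (hs : IsAddSymbol s) (x y : Fˣ) : s x y + s y x = 0 := by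
  have hx : s x (-(x * y)) = s x y := by
    rw [neg_mul_eq_neg_mul, hs.apply_mul_right, hs.apply_neg_self, zero_add]
  have hy : s y (-(x * y)) = s y x := by
    rw [← mul_neg, hs.apply_mul_right, hs.apply_neg_self, add_zero]
  have h := hs.apply_neg_self (x * y)
  rwa [hs.apply_mul_left, hx, hy] at h

theorem apply_zpow_zpow_of_odd (hs : IsAddSymbol s) (x : Fˣ) {m k : ℤ} (hm : Odd m)
    (hk : Odd k) : s (x ^ m) (x ^ k) = s x x := by
  obtain ⟨t, ht⟩ := hm.mul hk
  have h2 : (2 : ℤ) • s x x = 0 := by rw [two_zsmul]; exact hs.apply_add_apply_swap x x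
  rw [hs.apply_zpow_zpow, ht, add_zsmul, mul_comm, mul_zsmul, h2, zsmul_zero, zero_add, one_zsmul]

theorem apply_self_eq_zero_of_odd_orderOf (hs : IsAddSymbol s) {g : Fˣ}
    (hodd : Odd (orderOf g)) : s g g = 0 := by
  rw [← hs.apply_zpow_zpow_of_odd g (Int.odd_coe_nat _ |>.mpr hodd) odd_one, zpow_natCast,
    pow_orderOf_eq_one, hs.apply_one_left]

theorem eq_zero_of_apply_self_eq_zero (hs : IsAddSymbol s) {g : Fˣ}
    (hg : ∀ x, x ∈ Subgroup.zpowers g) (hgg : s g g = 0) (x y : Fˣ) : s x y = 0 := by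
  obtain ⟨m, rfl⟩ := Subgroup.mem_zpowers_iff.mp (hg x)
  obtain ⟨k, rfl⟩ := Subgroup.mem_zpowers_iff.mp (hg y)
  rw [hs.apply_zpow_zpow, hgg, smul_zero]

end IsAddSymbol

/-- (Steinberg) Any symbol on a finite field is trivial; equivalently, `K₂` of a
finite field vanishes. -/
theorem symbol_trivial_of_finite {F A : Type*} [Field F] [Finite F] [AddCommGroup A]
    (s : Fˣ → Fˣ → A) (hs : IsAddSymbol s) (x y : Fˣ) : s x y = 0 := by
  obtain ⟨g, hg⟩ := IsCyclic.exists_generator (α := Fˣ)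
  refine hs.eq_zero_of_apply_self_eq_zero hg ?_ x y
  rcases Nat.even_or_odd (orderOf g) with heven | hodd
  · obtain ⟨m, k, hm, hk, hsum⟩ := FiniteField.exists_odd_zpow_add_odd_zpow_eq_one hg heven
    rw [← hs.apply_zpow_zpow_of_odd g hm hk]
    exact hs.apply_eq_zero_of_add_eq_one hsum
  · exact hs.apply_self_eq_zero_of_odd_orderOf hodd
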